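/- Let μ be the sparse measure on 2^ℕ (marginals m_{n_k}({1}) = 2^k/(2^k+1) along the sparse index sequence n_0 = 0, n_{k+1} = n_k + 2^{k·(Σ_{i≤k} i)}, and m_n({1}) = 1/2 otherwise), set p_k = 2^{Σ_{i≤k} i}, and for k ≥ 1 let Z_k = {x ∈ 2^ℕ : the number of indices i with n_k < i < n_{k+1} and x(i) = 1 is at most p_k}. Then the events (Z_k)_{k≥1} are mutually independent under μ and μ-almost every x belongs to only finitely many of the sets Z_k; i.e., μ(limsup_k Z_k) = 0. -/

import Mathlib

/-!
The coordinates are independent under the product measure, so events determined by pairwise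
disjoint blocks of coordinates are independent; `Z_k` is determined by the block
`(n_k, n_{k+1})`. Inside a block every marginal is a fair coin, so `μ Z_k` is at most the number
of subsets of the block with at most `p_k` elements, times `2^{-N}` for the block length `N`.
That count is at most `(p_k + 1) (N + 1)^{p_k}`, which the block length `N = p_k^k - 1` beats by
a factor `2^{k-1}`; the series `∑ μ Z_k` converges and Borel–Cantelli applies.
-/

open MeasureTheory Filter Set ENNReal

/-- `μ` is the product of the marginal measures `m n` on `Bool`. -/
def IsProductMeasure (μ : Measure (ℕ → Bool)) (m : ℕ → Measure Bool) : Prop :=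
  ∀ (s : Finset ℕ) (a : ℕ → Bool),
    μ {x | ∀ n ∈ s, x n = a n} = ∏ n ∈ s, m n {a n}

/-- The sparse index sequence: `n₀ = 0` and `n_{k+1} = n_k + 2 ^ (k · Σ_{i ≤ k} i)`. -/
def sparseSeq : ℕ → ℕ
  | 0 => 0
  | k + 1 => sparseSeq k + 2 ^ (k * ∑ i ∈ Finset.range (k + 1), i)

/-- `p_k = 2 ^ (Σ_{i ≤ k} i)`. -/
def sparseP (k : ℕ) : ℕ := 2 ^ (∑ i ∈ Finset.range (k + 1), i)

/-- The marginals of the sparse measure: `m (n_k) {1} = 2^k/(2^k+1)` along the sparse index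
sequence, and `m n {1} = 1/2` for `n` not of the form `n_k`. -/
def IsSparseMarginals (m : ℕ → Measure Bool) : Prop :=
  (∀ k : ℕ, m (sparseSeq k) {true} = (2 ^ k : ℝ≥0∞) / (2 ^ k + 1)) ∧
    ∀ n : ℕ, (∀ k : ℕ, n ≠ sparseSeq k) → m n {true} = 1 / 2

/-- The multiplicative jump `m n {0} / m n {1}` of the sparse measure: `r (n_k) = 2⁻ᵏ` along the
sparse index sequence and `r n = 1` otherwise. -/
def IsSparseJump (r : ℕ → ℝ≥0∞) : Prop :=
  (∀ k : ℕ, r (sparseSeq k) = ((2 : ℝ≥0∞) ^ k)⁻¹) ∧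
    ∀ n : ℕ, (∀ k : ℕ, n ≠ sparseSeq k) → r n = 1

/-- The number of indices `i` with `n_k < i < n_{k+1}` and `x i = 1`. -/
def onesBetween (x : ℕ → Bool) (k : ℕ) : ℕ :=
  ((Finset.Ioo (sparseSeq k) (sparseSeq (k + 1))).filter fun i => x i = true).card

/-- The event `Z_k`: the number of `1`s of `x` strictly between `n_k` and `n_{k+1}` is at most
`p_k`. -/
def sparseEvent (k : ℕ) : Set (ℕ → Bool) := {x | onesBetween x k ≤ sparseP k}

open Function ProbabilityTheory Finset

theorem MeasureTheory.Measure.eq_infinitePi_of_pi_singleton {ι : Type*} {X : ι → Type*}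
    [∀ i, MeasurableSpace (X i)] [∀ i, Countable (X i)] [∀ i, MeasurableSingletonClass (X i)]
    (P : ∀ i, Measure (X i)) [∀ i, IsProbabilityMeasure (P i)] {μ : Measure (∀ i, X i)}
    (h : ∀ (s : Finset ι) (a : ∀ i, X i),
      μ ((s : Set ι).pi fun i ↦ {a i}) = ∏ i ∈ s, P i {a i}) :
    μ = Measure.infinitePi P := by
  have _ i : Nonempty (X i) := nonempty_of_isProbabilityMeasure (P i)
  have _ : IsFiniteMeasure μ := ⟨by
    simpa using (h ∅ fun i ↦ Classical.arbitrary _).trans_lt (by simp)⟩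
  refine ((Measure.isProjectiveLimit_infinitePi P).unique fun s ↦ ?_).symm
  refine Measure.ext_iff_singleton.2 fun a ↦ ?_
  classical
  let a' : ∀ i, X i := fun i ↦ if hi : i ∈ s then a ⟨i, hi⟩ else Classical.arbitrary _
  have hpre : s.restrict ⁻¹' {a} = (s : Set ι).pi fun i ↦ {a' i} := by
    ext x; simp +contextual [funext_iff, a']
  rw [Measure.map_apply (Finset.measurable_restrict s) (measurableSet_singleton a), hpre, h,
    Measure.pi_singleton, ← Finset.prod_coe_sort]
  simp [a']

theorem ProbabilityTheory.iIndep.biSup_of_pairwise_disjoint {Ω ι κ : Type*}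
    {mΩ : MeasurableSpace Ω} {μ : Measure Ω} {m : ι → MeasurableSpace Ω}
    (h_le : ∀ i, m i ≤ mΩ) (h : iIndep m μ) {B : κ → Set ι}
    (hB : Pairwise (Disjoint on B)) :
    iIndep (fun k ↦ ⨆ i ∈ B k, m i) μ := by
  have := h.isProbabilityMeasure
  classical
  rw [iIndep_iff]
  intro T E hE
  induction T using Finset.induction_on with
  | empty => simp
  | insert a T ha ih =>
    have hdisj : Disjoint (B a) (⋃ k ∈ T, B k) :=
      Set.disjoint_iUnion₂_right.2 fun k hk ↦ hB fun hak ↦ ha (hak ▸ hk)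
    have hmeas : MeasurableSet[⨆ i ∈ ⋃ k ∈ T, B k, m i] (⋂ k ∈ T, E k) :=
      .biInter T.countable_toSet fun k hk ↦
        have hle : ⨆ i ∈ B k, m i ≤ ⨆ i ∈ ⋃ k ∈ T, B k, m i :=
          biSup_mono fun i hi ↦ Set.mem_biUnion hk hi
        hle _ (hE k (Finset.mem_insert_of_mem hk))
    rw [Finset.set_biInter_insert, Finset.prod_insert ha, ← ih fun k hk ↦ hE k
      (Finset.mem_insert_of_mem hk)]
    exact (Indep_iff _ _ μ).1 (indep_iSup_of_disjoint h_le h hdisj) _ _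
      (hE a (Finset.mem_insert_self a T)) hmeas

theorem ProbabilityTheory.iIndep_biSup_comap_eval_infinitePi {ι κ : Type*} {X : ι → Type*}
    [∀ i, MeasurableSpace (X i)] (P : ∀ i, Measure (X i)) [∀ i, IsProbabilityMeasure (P i)]
    {B : κ → Set ι} (hB : Pairwise (Disjoint on B)) :
    iIndep (fun k ↦ ⨆ i ∈ B k, MeasurableSpace.comap (fun x : ∀ i, X i ↦ x i) inferInstance)
      (Measure.infinitePi P) :=
  (iIndepFun_infinitePi (X := fun _ ↦ id) fun _ ↦ measurable_id).iIndep
    |>.biSup_of_pairwise_disjoint (fun i ↦ (measurable_pi_apply i).comap_le) hB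

theorem IsProductMeasure.eq_infinitePi {m : ℕ → Measure Bool}
    [∀ n, IsProbabilityMeasure (m n)] {μ : Measure (ℕ → Bool)} (hμ : IsProductMeasure μ m) :
    μ = Measure.infinitePi m :=
  Measure.eq_infinitePi_of_pi_singleton m fun s a ↦ by
    convert hμ s a using 2
    ext x
    simp

theorem sparseSeq_strictMono : StrictMono sparseSeq :=
  strictMono_nat_of_lt_succ fun _ ↦ Nat.lt_add_of_pos_right (Nat.two_pow_pos _)

abbrev sparseBlockSigma (k : ℕ) : MeasurableSpace (ℕ → Bool) :=
  ⨆ i ∈ Set.Ioo (sparseSeq k) (sparseSeq (k + 1)),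
    MeasurableSpace.comap (fun x ↦ x i) inferInstance

theorem measurable_onesBetween (k : ℕ) :
    Measurable[sparseBlockSigma k] fun x ↦ onesBetween x k := by
  simp only [onesBetween, card_filter]
  refine Finset.measurable_sum _ fun i hi ↦ ?_
  have hle :
      MeasurableSpace.comap (fun x : ℕ → Bool ↦ x i) inferInstance ≤ sparseBlockSigma k :=
    le_biSup (fun i ↦ MeasurableSpace.comap (fun x : ℕ → Bool ↦ x i) inferInstance)
      (by simpa using hi)
  exact ((Measurable.of_discrete (f := fun b : Bool ↦ if b = true then 1 else 0)).comp
    (comap_measurable _)).mono hle le_rfl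

theorem iIndep_sparseBlockSigma {m : ℕ → Measure Bool} [∀ n, IsProbabilityMeasure (m n)] :
    iIndep (fun k ↦ sparseBlockSigma (k + 1)) (Measure.infinitePi m) :=
  iIndep_biSup_comap_eval_infinitePi m <| Monotone.pairwise_disjoint_on_Ioo_succ fun _ _ h ↦
    sparseSeq_strictMono.monotone (Nat.succ_le_succ h)

theorem IsSparseMarginals.measure_singleton_of_mem_Ioo {m : ℕ → Measure Bool}
    [∀ n, IsProbabilityMeasure (m n)] (hm : IsSparseMarginals m) {k n : ℕ}
    (hn : n ∈ Finset.Ioo (sparseSeq k) (sparseSeq (k + 1))) (b : Bool) : m n {b} = 2⁻¹ := by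
  have hn' : ∀ j, n ≠ sparseSeq j := by
    rintro j rfl
    rw [Finset.mem_Ioo, sparseSeq_strictMono.lt_iff_lt, sparseSeq_strictMono.lt_iff_lt] at hn
    omega
  have htrue : m n {true} = 2⁻¹ := by rw [hm.2 n hn', one_div]
  cases b
  · rw [show ({false} : Set Bool) = {true}ᶜ by simp,
      prob_compl_eq_one_sub (measurableSet_singleton _), htrue, ENNReal.one_sub_inv_two]
  · exact htrue

theorem IsProductMeasure.measure_filter_mem_le {m : ℕ → Measure Bool}
    {μ : Measure (ℕ → Bool)} (hμ : IsProductMeasure μ m) {B : Finset ℕ}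
    (hB : ∀ n ∈ B, ∀ b, m n {b} = 2⁻¹)
    (T : Finset (Finset ℕ)) :
    μ {x | B.filter (x · = true) ∈ T} ≤ #T * 2⁻¹ ^ #B :=
  calc μ {x | B.filter (x · = true) ∈ T}
      ≤ μ (⋃ t ∈ T, {x | ∀ n ∈ B, x n = decide (n ∈ t)}) :=
        measure_mono fun x hx ↦ Set.mem_biUnion hx fun n hn ↦ by simp [hn]
    _ ≤ ∑ t ∈ T, μ {x | ∀ n ∈ B, x n = decide (n ∈ t)} := measure_biUnion_finset_le T _
    _ = #T * 2⁻¹ ^ #B := by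
        rw [Finset.sum_congr rfl fun t _ ↦ (hμ B fun n ↦ decide (n ∈ t)).trans
          (Finset.prod_congr rfl fun n hn ↦ hB n hn _)]
        simp

theorem Finset.card_powerset_filter_card_le_le {α : Type*} [DecidableEq α] (B : Finset α)
    (p : ℕ) :
    #{t ∈ B.powerset | #t ≤ p} ≤ (p + 1) * (#B + 1) ^ p :=
  calc #{t ∈ B.powerset | #t ≤ p}
      ≤ #((range (p + 1)).biUnion fun i ↦ B.powersetCard i) :=
        card_le_card fun t ht ↦ by
          simp only [mem_filter, mem_powerset] at ht
          simpa [Nat.lt_succ_iff] using ht.symm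
    _ ≤ ∑ i ∈ range (p + 1), #(B.powersetCard i) := card_biUnion_le
    _ ≤ ∑ i ∈ range (p + 1), (#B + 1) ^ p := sum_le_sum fun i hi ↦ by
        rw [card_powersetCard]
        exact (Nat.choose_le_pow _ _).trans ((Nat.pow_le_pow_left (Nat.le_succ _) _).trans
          (Nat.pow_le_pow_right (Nat.succ_pos _) (mem_range_succ_iff.1 hi)))
    _ = (p + 1) * (#B + 1) ^ p := by simp

theorem succ_mul_add_two_le_two_pow_succ {s : ℕ} (hs : 2 ≤ s) :
    (s + 1) * s + 2 ≤ 2 ^ (s + 1) := by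
  induction s, hs using Nat.le_induction with
  | base => norm_num
  | succ s hs ih =>
    rw [pow_succ]
    nlinarith

theorem mul_mul_two_pow_add_le_two_pow {j s : ℕ} (hj : 2 ≤ j) (hs : j < s) :
    j * s * 2 ^ s + s + j + 1 ≤ 2 ^ (j * s) := by
  have hjs : j * s + 2 ≤ 2 ^ s := by
    obtain ⟨t, rfl⟩ : ∃ t, s = t + 1 := ⟨s - 1, by omega⟩
    have := succ_mul_add_two_le_two_pow_succ (s := t) (by omega)
    have : j * (t + 1) ≤ (t + 1) * t := by rw [mul_comm]; exact Nat.mul_le_mul_left _ (by omega)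
    omega
  have : s < 2 ^ s := Nat.lt_two_pow_self
  calc j * s * 2 ^ s + s + j + 1 ≤ (j * s + 2) * 2 ^ s := by rw [add_mul]; omega
    _ ≤ 2 ^ s * 2 ^ s := Nat.mul_le_mul_right _ hjs
    _ = 2 ^ (2 * s) := by ring
    _ ≤ 2 ^ (j * s) := Nat.pow_le_pow_right two_pos (Nat.mul_le_mul_right _ hj)

theorem lt_sum_range_succ_id {j : ℕ} (hj : 2 ≤ j) : j < ∑ i ∈ range (j + 1), i := by
  have h := Finset.sum_range_id_mul_two (j + 1)
  rw [Nat.add_sub_cancel] at h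
  nlinarith

theorem card_Ioo_sparseSeq_add_one (j : ℕ) :
    #(Finset.Ioo (sparseSeq j) (sparseSeq (j + 1))) + 1 = 2 ^ (j * ∑ i ∈ range (j + 1), i) := by
  rw [Nat.card_Ioo, sparseSeq]
  have := Nat.two_pow_pos (j * ∑ i ∈ range (j + 1), i)
  omega

theorem card_subsets_card_le_sparseP_mul_le {j : ℕ} (hj : 2 ≤ j) :
    #{t ∈ (Finset.Ioo (sparseSeq j) (sparseSeq (j + 1))).powerset | #t ≤ sparseP j} *
        2 ^ (j - 1) ≤ 2 ^ #(Finset.Ioo (sparseSeq j) (sparseSeq (j + 1))) := by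
  set B := Finset.Ioo (sparseSeq j) (sparseSeq (j + 1))
  set s := ∑ i ∈ range (j + 1), i
  have hB : #B + 1 = 2 ^ (j * s) := card_Ioo_sparseSeq_add_one j
  have hexp : j * s * 2 ^ s + s + j + 1 ≤ 2 ^ (j * s) :=
    mul_mul_two_pow_add_le_two_pow hj (lt_sum_range_succ_id hj)
  calc #{t ∈ B.powerset | #t ≤ sparseP j} * 2 ^ (j - 1)
      ≤ (2 ^ s + 1) * (#B + 1) ^ 2 ^ s * 2 ^ (j - 1) :=
        Nat.mul_le_mul_right _ (B.card_powerset_filter_card_le_le _)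
    _ ≤ 2 ^ (s + 1) * 2 ^ (j * s * 2 ^ s) * 2 ^ (j - 1) := by
        rw [hB, ← pow_mul, pow_succ]
        gcongr
        linarith [Nat.one_le_two_pow (n := s)]
    _ = 2 ^ (s + 1 + j * s * 2 ^ s + (j - 1)) := by ring
    _ ≤ 2 ^ #B := Nat.pow_le_pow_right two_pos (by omega)

theorem ENNReal.natCast_mul_inv_two_pow_le {C k N : ℕ} (h : C * 2 ^ k ≤ 2 ^ N) :
    (C : ℝ≥0∞) * 2⁻¹ ^ N ≤ 2⁻¹ ^ k := by
  have h' : (C : ℝ≥0∞) * 2 ^ k ≤ 2 ^ N := by exact_mod_cast h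
  rw [← ENNReal.inv_pow, ← ENNReal.inv_pow, ← div_eq_mul_inv,
    ENNReal.div_le_iff (by simp) (by simp), mul_comm, ← div_eq_mul_inv,
    ENNReal.le_div_iff_mul_le (by simp) (by simp)]
  exact h'

theorem measure_sparseEvent_le {m : ℕ → Measure Bool} [∀ n, IsProbabilityMeasure (m n)]
    (hm : IsSparseMarginals m) {μ : Measure (ℕ → Bool)} (hμ : IsProductMeasure μ m) {j : ℕ}
    (hj : 2 ≤ j) : μ (sparseEvent j) ≤ 2⁻¹ ^ (j - 1) := by
  set B := Finset.Ioo (sparseSeq j) (sparseSeq (j + 1))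
  have hZ :
      sparseEvent j = {x | B.filter (x · = true) ∈ {t ∈ B.powerset | #t ≤ sparseP j}} := by
    ext x
    simp [sparseEvent, onesBetween, B]
  rw [hZ]
  exact (hμ.measure_filter_mem_le (fun n hn ↦ hm.measure_singleton_of_mem_Ioo hn) _).trans
    (ENNReal.natCast_mul_inv_two_pow_le (card_subsets_card_le_sparseP_mul_le hj))

/-- for the sparse product measure, the events `(Z_k)_{k ≥ 1}` are mutually
independent and almost every `x` lies in only finitely many of them:
`μ (limsup_k Z_k) = 0`. -/
theorem sparse_events_indep_and_limsup_null
    (m : ℕ → Measure Bool) (hprob : ∀ n, IsProbabilityMeasure (m n))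
    (hm : IsSparseMarginals m)
    (μ : Measure (ℕ → Bool)) (hμ : IsProductMeasure μ m) :
    ProbabilityTheory.iIndepSet (fun k : ℕ => sparseEvent (k + 1)) μ ∧
      μ (Filter.limsup (fun k : ℕ => sparseEvent (k + 1)) atTop) = 0 := by
  have hμ_eq : μ = Measure.infinitePi m := hμ.eq_infinitePi
  refine ⟨?_, measure_limsup_atTop_eq_zero ?_⟩
  · rw [iIndepSet_iff_iIndep, hμ_eq]
    exact iIndep_of_iIndep_of_le iIndep_sparseBlockSigma fun k ↦
      MeasurableSpace.generateFrom_le fun _ hZ ↦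
        hZ ▸ measurable_onesBetween (k + 1) measurableSet_Iic
  · have : IsProbabilityMeasure μ := hμ_eq ▸ inferInstance
    refine ne_top_of_le_ne_top (ENNReal.tsum_geometric_two.trans_ne ENNReal.ofNat_ne_top)
      (ENNReal.tsum_le_tsum fun k ↦ ?_)
    rcases k with _ | k
    · simpa using prob_le_one
    · simpa using measure_sparseEvent_le hm hμ (j := k + 2) (by omega)
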